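/- (Proposition 2 pointwise inequalities) Fix ρ > 0 and K ≥ 2. For scoring vectors u, v ∈ ℝ^K with zero coordinate sums, let h(u) = argmax_k u_k and let y ∈ {1,…,K}. Then (i) 𝟙[h(u) ≠ y] ≤ L^ρ(v, y) + 𝟙[Φ_ρ(μ_{h(v)}(v, h(u))) = 1], and (ii) 𝟙[Φ_ρ(μ_{h(v)}(v, h(u))) = 1] ≤ L^ρ(u, y) + L^ρ(v, y). -/

import Mathlib

open MeasureTheory Finset

/-- The ramp loss with margin `ρ`. -/
noncomputable def ramp (ρ x : ℝ) : ℝ :=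
  if ρ ≤ x then 0 else if x ≤ 0 then 1 else 1 - x / ρ

/-- The absolute margin function: `margin w y k = w k` if `k = y`, else `-w k`. -/
def margin {K : ℕ} (w : Fin K → ℝ) (y k : Fin K) : ℝ :=
  if k = y then w k else -w k

/-- Entrywise L1 distance between the matrices of absolute margin violations
`M^ρ(u)` and `M^ρ(v)`, where `M^ρ_{i,j}(w) = Φ_ρ(μ_i(w,j))`. -/
noncomputable def l1diff (ρ : ℝ) {K : ℕ} (u v : Fin K → ℝ) : ℝ :=
  ∑ i : Fin K, ∑ j : Fin K, |ramp ρ (margin u j i) - ramp ρ (margin v j i)|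

/-- The margin-based multi-class loss `L^ρ(w, y) = ∑_k Φ_ρ(μ_k(w,y))`. -/
noncomputable def Lmargin (ρ : ℝ) {K : ℕ} (w : Fin K → ℝ) (y : Fin K) : ℝ :=
  ∑ k : Fin K, ramp ρ (margin w y k)

/-!
A zero-sum score vector has a nonnegative maximal coordinate, so for a maximiser `i` of `w` the
margin `μ_i(w, y) = -w_i` is nonpositive as soon as `i ≠ y`, and then the ramp loss charges it
fully. For (i), if `h(u) ≠ y` then either `h(v) = h(u)`, and `L^ρ(v, y)` pays for the coordinate
`h(v)`, or `h(v) ≠ h(u)` and the indicator term is `1`. For (ii), if `h(u) ≠ y` then `L^ρ(u, y)`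
pays for `h(u)`; if `h(u) = y` the indicator term is bounded by one summand of `L^ρ(v, y)`.
-/

theorem nonneg_of_sum_eq_zero_of_forall_le {ι M : Type*} [Fintype ι] [AddCommMonoid M]
    [LinearOrder M] [IsOrderedCancelAddMonoid M] {f : ι → M} (hf : ∑ k, f k = 0) {i : ι}
    (hi : ∀ k, f k ≤ f i) : 0 ≤ f i := by
  by_contra! hneg
  have : ∑ k, f k < 0 :=
    Finset.sum_neg (fun k _ => (hi k).trans_lt hneg) ⟨i, Finset.mem_univ i⟩
  exact this.ne hf

theorem margin_nonpos_of_ne {K : ℕ} {w : Fin K → ℝ} {y i : Fin K} (hw : 0 ≤ w i) (hiy : i ≠ y) :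
    margin w y i ≤ 0 := by
  simp only [margin, if_neg hiy]
  linarith

section Ramp

variable {ρ : ℝ} (hρ : 0 < ρ)
include hρ

theorem ramp_nonneg (x : ℝ) : 0 ≤ ramp ρ x := by
  unfold ramp
  split_ifs with hρx hx
  · rfl
  · exact zero_le_one
  · have : x / ρ < 1 := (div_lt_one hρ).2 (not_le.1 hρx)
    linarith

theorem ramp_eq_one_of_nonpos {x : ℝ} (hx : x ≤ 0) : ramp ρ x = 1 := by
  rw [ramp, if_neg (by linarith), if_pos hx]

theorem Lmargin_nonneg {K : ℕ} (w : Fin K → ℝ) (y : Fin K) : 0 ≤ Lmargin ρ w y :=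
  Finset.sum_nonneg fun _ _ => ramp_nonneg hρ _

theorem ramp_margin_le_Lmargin {K : ℕ} (w : Fin K → ℝ) (y k : Fin K) :
    ramp ρ (margin w y k) ≤ Lmargin ρ w y :=
  Finset.single_le_sum (f := fun j => ramp ρ (margin w y j)) (fun _ _ => ramp_nonneg hρ _)
    (Finset.mem_univ k)

theorem one_le_Lmargin_of_margin_nonpos {K : ℕ} {w : Fin K → ℝ} {y k : Fin K}
    (h : margin w y k ≤ 0) : 1 ≤ Lmargin ρ w y :=
  ramp_eq_one_of_nonpos hρ h ▸ ramp_margin_le_Lmargin hρ w y k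

end Ramp

theorem ite_eq_one_le {a : ℝ} (ha : 0 ≤ a) : (if a = 1 then (1 : ℝ) else 0) ≤ a := by
  split_ifs with h
  · exact h.ge
  · exact ha

section Pointwise

variable {K : ℕ} {ρ : ℝ} (hρ : 0 < ρ) {u v : Fin K → ℝ} {iu iv : Fin K}
include hρ

theorem ite_ne_le_Lmargin_add {y : Fin K} (hv : 0 ≤ v iv) :
    (if iu ≠ y then (1 : ℝ) else 0) ≤
      Lmargin ρ v y + (if ramp ρ (margin v iu iv) = 1 then (1 : ℝ) else 0) := by
  have hL := Lmargin_nonneg hρ v y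
  by_cases hiu : iu = y
  · rw [if_neg (not_not.2 hiu)]
    positivity
  rw [if_pos hiu]
  by_cases hvu : iv = iu
  · have := one_le_Lmargin_of_margin_nonpos hρ (margin_nonpos_of_ne hv (hvu ▸ hiu : iv ≠ y))
    have : (0 : ℝ) ≤ if ramp ρ (margin v iu iv) = 1 then (1 : ℝ) else 0 := by positivity
    linarith
  · rw [if_pos (ramp_eq_one_of_nonpos hρ (margin_nonpos_of_ne hv hvu))]
    linarith

theorem ite_ramp_eq_one_le_Lmargin_add {y : Fin K} (hu : 0 ≤ u iu) :
    (if ramp ρ (margin v iu iv) = 1 then (1 : ℝ) else 0) ≤ Lmargin ρ u y + Lmargin ρ v y := by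
  have hind : (if ramp ρ (margin v iu iv) = 1 then (1 : ℝ) else 0) ≤ 1 := by
    split_ifs <;> norm_num
  by_cases hiu : iu = y
  · subst hiu
    linarith [ite_eq_one_le (ramp_nonneg hρ (margin v iu iv)),
      ramp_margin_le_Lmargin hρ v iu iv, Lmargin_nonneg hρ u iu]
  · linarith [one_le_Lmargin_of_margin_nonpos hρ (margin_nonpos_of_ne hu hiu),
      Lmargin_nonneg hρ v y]

end Pointwise

theorem prop2_pointwise_general {K : ℕ} (ρ : ℝ) (hρ : 0 < ρ)
    (u v : Fin K → ℝ) (hu : ∑ k : Fin K, u k = 0) (hv : ∑ k : Fin K, v k = 0)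
    (iu iv : Fin K) (hiu : ∀ k : Fin K, u k ≤ u iu) (hiv : ∀ k : Fin K, v k ≤ v iv)
    (y : Fin K) :
    (if iu ≠ y then (1 : ℝ) else 0) ≤
        Lmargin ρ v y + (if ramp ρ (margin v iu iv) = 1 then (1 : ℝ) else 0) ∧
    (if ramp ρ (margin v iu iv) = 1 then (1 : ℝ) else 0) ≤
        Lmargin ρ u y + Lmargin ρ v y :=
  ⟨ite_ne_le_Lmargin_add hρ (nonneg_of_sum_eq_zero_of_forall_le hv hiv),
    ite_ramp_eq_one_le_Lmargin_add hρ (nonneg_of_sum_eq_zero_of_forall_le hu hiu)⟩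

theorem prop2_pointwise {K : ℕ} (hK : 2 ≤ K) (ρ : ℝ) (hρ : 0 < ρ)
    (u v : Fin K → ℝ) (hu : ∑ k : Fin K, u k = 0) (hv : ∑ k : Fin K, v k = 0)
    (iu iv : Fin K) (hiu : ∀ k : Fin K, u k ≤ u iu) (hiv : ∀ k : Fin K, v k ≤ v iv)
    (y : Fin K) :
    (if iu ≠ y then (1 : ℝ) else 0) ≤
        Lmargin ρ v y + (if ramp ρ (margin v iu iv) = 1 then (1 : ℝ) else 0) ∧
    (if ramp ρ (margin v iu iv) = 1 then (1 : ℝ) else 0) ≤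
        Lmargin ρ u y + Lmargin ρ v y :=
  prop2_pointwise_general ρ hρ u v hu hv iu iv hiu hiv y
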